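/- Let $\Phi$ be an $m \times n$ real matrix satisfying the $(2K,\delta)$-restricted isometry property with $\delta < 1$. Then for any two $K$-sparse vectors $x, y \in \mathbb{R}^n$ with disjoint supports, $|\langle \Phi x, \Phi y \rangle| \leq \delta \|x\| \, \|y\|$. -/

import Mathlib

open Finset Matrix

/-! The polarization identity `4 ⟨Φx, Φy⟩ = ‖Φ(x + y)‖² - ‖Φ(x - y)‖²`, together with the RIP
bounds on the `2K`-sparse vectors `x ± y` and `‖x ± y‖² = ‖x‖² + ‖y‖²` for disjointly supported
`x, y`, gives `|⟨Φx, Φy⟩| ≤ δ (‖x‖² + ‖y‖²) / 2`. Applied to `x / ‖x‖` and `y / ‖y‖` this is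
`δ`, and bilinearity rescales it to `δ ‖x‖ ‖y‖`. -/

section Support

variable {ι M : Type*} [Fintype ι] [Zero M] [DecidableEq M]

lemma card_filter_ne_zero_le_add {x y z : ι → M} (h : ∀ i, x i = 0 → y i = 0 → z i = 0) :
    #{i | z i ≠ 0} ≤ #{i | x i ≠ 0} + #{i | y i ≠ 0} := by
  classical
  refine (card_le_card fun i hi => ?_).trans (card_union_le _ _)
  simp only [mem_filter, mem_univ, true_and, mem_union] at hi ⊢
  tauto

lemma card_filter_ne_zero_le_of_imp {x z : ι → M} (h : ∀ i, z i ≠ 0 → x i ≠ 0) :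
    #{i | z i ≠ 0} ≤ #{i | x i ≠ 0} :=
  card_le_card (monotone_filter_right _ fun i _ => h i)

end Support

section DotProduct

variable {m n : Type*} [Fintype m] [Fintype n]

lemma dotProduct_eq_zero_of_disjoint {x y : n → ℝ} (h : ∀ i, x i = 0 ∨ y i = 0) :
    x ⬝ᵥ y = 0 :=
  sum_eq_zero fun i _ => by rcases h i with h | h <;> simp [h]

lemma dotProduct_self_pos {x : n → ℝ} (hx : x ≠ 0) : 0 < x ⬝ᵥ x :=
  (sum_nonneg fun i _ => mul_self_nonneg (x i)).lt_of_ne' (dotProduct_self_eq_zero.not.mpr hx)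

lemma dotProduct_inv_sqrt_smul_self {x : n → ℝ} (hx : x ≠ 0) :
    ((√(x ⬝ᵥ x))⁻¹ • x) ⬝ᵥ ((√(x ⬝ᵥ x))⁻¹ • x) = 1 := by
  have hpos := dotProduct_self_pos hx
  rw [smul_dotProduct, dotProduct_smul, smul_smul, smul_eq_mul, ← mul_inv, ← sq,
    Real.sq_sqrt hpos.le, inv_mul_cancel₀ hpos.ne']

lemma add_dotProduct_add_sub_sub_dotProduct_sub (u v : n → ℝ) :
    (u + v) ⬝ᵥ (u + v) - (u - v) ⬝ᵥ (u - v) = 4 * (u ⬝ᵥ v) := by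
  simp only [add_dotProduct, dotProduct_add, sub_dotProduct, dotProduct_sub, dotProduct_comm v u]
  ring

lemma add_dotProduct_add_of_orthogonal {x y : n → ℝ} (h : x ⬝ᵥ y = 0) :
    (x + y) ⬝ᵥ (x + y) = x ⬝ᵥ x + y ⬝ᵥ y := by
  simp only [add_dotProduct, dotProduct_add, dotProduct_comm y x, h]
  ring

lemma sub_dotProduct_sub_of_orthogonal {x y : n → ℝ} (h : x ⬝ᵥ y = 0) :
    (x - y) ⬝ᵥ (x - y) = x ⬝ᵥ x + y ⬝ᵥ y := by
  simp only [sub_dotProduct, dotProduct_sub, dotProduct_comm y x, h]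
  ring

/-- The squared-norm form of the restricted isometry bound, at a single vector. -/
def AlmostIsometricAt (Φ : Matrix m n ℝ) (δ : ℝ) (z : n → ℝ) : Prop :=
  (1 - δ) * (z ⬝ᵥ z) ≤ Φ *ᵥ z ⬝ᵥ Φ *ᵥ z ∧ Φ *ᵥ z ⬝ᵥ Φ *ᵥ z ≤ (1 + δ) * (z ⬝ᵥ z)

lemma abs_mulVec_dotProduct_mulVec_le_of_orthogonal {Φ : Matrix m n ℝ} {δ : ℝ} {x y : n → ℝ}
    (horth : x ⬝ᵥ y = 0) (hadd : AlmostIsometricAt Φ δ (x + y))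
    (hsub : AlmostIsometricAt Φ δ (x - y)) :
    |Φ *ᵥ x ⬝ᵥ Φ *ᵥ y| ≤ δ * (x ⬝ᵥ x + y ⬝ᵥ y) / 2 := by
  have polar := add_dotProduct_add_sub_sub_dotProduct_sub (Φ *ᵥ x) (Φ *ᵥ y)
  rw [← mulVec_add, ← mulVec_sub] at polar
  rw [AlmostIsometricAt, add_dotProduct_add_of_orthogonal horth] at hadd
  rw [AlmostIsometricAt, sub_dotProduct_sub_of_orthogonal horth] at hsub
  rw [abs_le]
  constructor <;> linarith [hadd.1, hadd.2, hsub.1, hsub.2]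

end DotProduct

lemma abs_mulVec_dotProduct_mulVec_le_of_rip {m n K : ℕ} {δ : ℝ} {Φ : Matrix (Fin m) (Fin n) ℝ}
    (hRIP : ∀ z : Fin n → ℝ, #{i | z i ≠ 0} ≤ 2 * K → AlmostIsometricAt Φ δ z)
    {x y : Fin n → ℝ} (hx : #{i | x i ≠ 0} ≤ K) (hy : #{i | y i ≠ 0} ≤ K)
    (hdisj : ∀ i, x i = 0 ∨ y i = 0) :
    |Φ *ᵥ x ⬝ᵥ Φ *ᵥ y| ≤ δ * (x ⬝ᵥ x + y ⬝ᵥ y) / 2 := by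
  have hsparse {z : Fin n → ℝ} (hz : ∀ i, x i = 0 → y i = 0 → z i = 0) :
      AlmostIsometricAt Φ δ z :=
    hRIP z ((card_filter_ne_zero_le_add hz).trans (by omega))
  refine abs_mulVec_dotProduct_mulVec_le_of_orthogonal (dotProduct_eq_zero_of_disjoint hdisj)
    (hsparse fun i hx hy => ?_) (hsparse fun i hx hy => ?_) <;> simp [hx, hy]

theorem rip_disjoint_inner_bound_general (m n K : ℕ) (δ : ℝ)
    (Φ : Matrix (Fin m) (Fin n) ℝ)
    (hRIP : ∀ z : Fin n → ℝ,
      (Finset.univ.filter (fun i => z i ≠ 0)).card ≤ 2 * K →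
      (1 - δ) * (z ⬝ᵥ z) ≤ (Φ.mulVec z) ⬝ᵥ (Φ.mulVec z) ∧
        (Φ.mulVec z) ⬝ᵥ (Φ.mulVec z) ≤ (1 + δ) * (z ⬝ᵥ z))
    (x y : Fin n → ℝ)
    (hx : (Finset.univ.filter (fun i => x i ≠ 0)).card ≤ K)
    (hy : (Finset.univ.filter (fun i => y i ≠ 0)).card ≤ K)
    (hdisj : ∀ i, x i = 0 ∨ y i = 0) :
    |(Φ.mulVec x) ⬝ᵥ (Φ.mulVec y)| ≤ δ * Real.sqrt (x ⬝ᵥ x) * Real.sqrt (y ⬝ᵥ y) := by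
  rcases eq_or_ne x 0 with rfl | hx0
  · simp
  rcases eq_or_ne y 0 with rfl | hy0
  · simp
  set a := √(x ⬝ᵥ x)
  set b := √(y ⬝ᵥ y)
  have ha : 0 < a := Real.sqrt_pos.mpr (dotProduct_self_pos hx0)
  have hb : 0 < b := Real.sqrt_pos.mpr (dotProduct_self_pos hy0)
  have hunit := abs_mulVec_dotProduct_mulVec_le_of_rip hRIP (x := a⁻¹ • x) (y := b⁻¹ • y)
    ((card_filter_ne_zero_le_of_imp fun i h => right_ne_zero_of_mul h).trans hx)
    ((card_filter_ne_zero_le_of_imp fun i h => right_ne_zero_of_mul h).trans hy)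
    (fun i => (hdisj i).imp (by simp [·]) (by simp [·]))
  rw [dotProduct_inv_sqrt_smul_self hx0, dotProduct_inv_sqrt_smul_self hy0, mulVec_smul,
    mulVec_smul, smul_dotProduct, dotProduct_smul, smul_smul, smul_eq_mul, abs_mul,
    abs_of_pos (by positivity)] at hunit
  calc |Φ *ᵥ x ⬝ᵥ Φ *ᵥ y| = a * b * ((b⁻¹ * a⁻¹) * |Φ *ᵥ x ⬝ᵥ Φ *ᵥ y|) := by field_simp
    _ ≤ a * b * δ := by gcongr; linarith
    _ = δ * a * b := by ring

/-- If `Φ` satisfies the `(2K, δ)`-RIP (squared-norm form) with `δ < 1`, then for any two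
`K`-sparse vectors `x, y` with disjoint supports, `|⟨Φx, Φy⟩| ≤ δ ‖x‖ ‖y‖`. -/
theorem rip_disjoint_inner_bound (m n K : ℕ) (δ : ℝ) (hδ : δ < 1)
    (Φ : Matrix (Fin m) (Fin n) ℝ)
    (hRIP : ∀ z : Fin n → ℝ,
      (Finset.univ.filter (fun i => z i ≠ 0)).card ≤ 2 * K →
      (1 - δ) * (z ⬝ᵥ z) ≤ (Φ.mulVec z) ⬝ᵥ (Φ.mulVec z) ∧
        (Φ.mulVec z) ⬝ᵥ (Φ.mulVec z) ≤ (1 + δ) * (z ⬝ᵥ z))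
    (x y : Fin n → ℝ)
    (hx : (Finset.univ.filter (fun i => x i ≠ 0)).card ≤ K)
    (hy : (Finset.univ.filter (fun i => y i ≠ 0)).card ≤ K)
    (hdisj : ∀ i, x i = 0 ∨ y i = 0) :
    |(Φ.mulVec x) ⬝ᵥ (Φ.mulVec y)| ≤ δ * Real.sqrt (x ⬝ᵥ x) * Real.sqrt (y ⬝ᵥ y) :=
  rip_disjoint_inner_bound_general m n K δ Φ hRIP x y hx hy hdisj
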